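/- Fix σ_t > 0 and x ∈ ℝⁿ. Let π_x be the probability measure on ℝⁿ with density dπ_x/dμ₀(x₀) = N(x; x₀, σ_t²I) / p_t(x) (the conditional law of the clean data x₀ given the noisy observation x under the VE forward process). Then x₀ is π_x-integrable and its posterior mean satisfies Tweedie's formula: ∫ x₀ dπ_x(x₀) = x + σ_t² ∇_x log p_t(x). -/

import Mathlib

/-!
Differentiate `p_t(x) = ∫ N(x; x₀, σ²I) dμ₀(x₀)` under the integral sign. The `x`-gradient of the
kernel is `σ⁻² N(x; x₀, σ²I) (x₀ - x)`, which is bounded uniformly in `x` and `x₀` because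
`r e^{-r²/(2σ²)} ≤ σ`; so dominated convergence gives `σ² ∇p_t(x) = ∫ N(x; x₀, σ²I) (x₀ - x) dμ₀`.
Dividing by `p_t(x) > 0` turns the left side into `σ² ∇ log p_t(x)` and the right side into
`∫ (x₀ - x) dπ_x`.
-/

open MeasureTheory Real

/-- Isotropic Gaussian density on ℝⁿ with mean `m` and covariance `v • I`
(`v` is the variance, i.e. `v = σ²`): `N(x; m, σ²I) = (2πσ²)^{-n/2} exp(-‖x-m‖²/(2σ²))`. -/
noncomputable def gaussDensity (n : ℕ) (v : ℝ) (m x : EuclideanSpace ℝ (Fin n)) : ℝ :=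
  (2 * π * v) ^ (-(n : ℝ) / 2) * Real.exp (-‖x - m‖ ^ 2 / (2 * v))

open Filter Topology InnerProductSpace

lemma mul_exp_neg_sq_div_le_sqrt {v : ℝ} (hv : 0 < v) (s : ℝ) :
    s * exp (-s ^ 2 / (2 * v)) ≤ √v := by
  have hr : 0 < √v := sqrt_pos.2 hv
  have hlin : s ≤ √v * (s ^ 2 / (2 * v) + 1) := by
    set r := √v
    rw [show v = r ^ 2 from (sq_sqrt hv.le).symm]
    field_simp
    nlinarith [sq_nonneg (s - r)]
  have hexp : s ≤ √v * exp (s ^ 2 / (2 * v)) :=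
    hlin.trans (mul_le_mul_of_nonneg_left (add_one_le_exp _) hr.le)
  calc s * exp (-s ^ 2 / (2 * v)) ≤ √v * exp (s ^ 2 / (2 * v)) * exp (-s ^ 2 / (2 * v)) :=
        mul_le_mul_of_nonneg_right hexp (exp_pos _).le
    _ = √v := by rw [mul_assoc, ← exp_add, neg_div, add_neg_cancel, exp_zero, mul_one]

theorem HasGradientAt.log {F : Type*} [NormedAddCommGroup F] [InnerProductSpace ℝ F]
    [CompleteSpace F] {f : F → ℝ} {g x : F} (hf : HasGradientAt f g x) (hx : f x ≠ 0) :
    HasGradientAt (fun z => Real.log (f z)) ((f x)⁻¹ • g) x := by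
  rw [hasGradientAt_iff_hasFDerivAt, map_smul]
  exact hf.hasFDerivAt.log hx

theorem hasGradientAt_integral_of_dominated_of_gradient_le {α F : Type*} [MeasurableSpace α]
    {μ : Measure α} [NormedAddCommGroup F] [InnerProductSpace ℝ F] [CompleteSpace F]
    {f : F → α → ℝ} {g : F → α → F} {bound : α → ℝ} {s : Set F} {x₀ : F} (hs : s ∈ 𝓝 x₀)
    (hf_meas : ∀ᶠ x in 𝓝 x₀, AEStronglyMeasurable (f x) μ) (hf_int : Integrable (f x₀) μ)
    (hg_meas : AEStronglyMeasurable (g x₀) μ) (h_bound : ∀ᵐ a ∂μ, ∀ x ∈ s, ‖g x a‖ ≤ bound a)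
    (bound_integrable : Integrable bound μ)
    (h_diff : ∀ᵐ a ∂μ, ∀ x ∈ s, HasGradientAt (f · a) (g x a) x) :
    HasGradientAt (fun x => ∫ a, f x a ∂μ) (∫ a, g x₀ a ∂μ) x₀ := by
  have hg_int : Integrable (g x₀) μ :=
    bound_integrable.mono' hg_meas (h_bound.mono fun a ha => ha x₀ (mem_of_mem_nhds hs))
  -- `toDual` is only conjugate-linear; over `ℝ` it is definitionally the linear map `innerSL ℝ`.
  have h_comm : toDual ℝ F (∫ a, g x₀ a ∂μ) = ∫ a, toDual ℝ F (g x₀ a) ∂μ :=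
    ((innerSL ℝ).integral_comp_comm hg_int).symm
  rw [hasGradientAt_iff_hasFDerivAt, h_comm]
  refine hasFDerivAt_integral_of_dominated_of_fderiv_le hs hf_meas hf_int
    ((toDual ℝ F).continuous.comp_aestronglyMeasurable hg_meas) ?_ bound_integrable h_diff
  simpa only [LinearIsometryEquiv.norm_map] using h_bound

section WithDensityOfReal

variable {α E : Type*} [MeasurableSpace α] {μ : Measure α} [NormedAddCommGroup E]
  [NormedSpace ℝ E] {f : α → ℝ}

lemma integrable_withDensity_ofReal_iff (hf : AEMeasurable f μ) (hf_nonneg : 0 ≤ᵐ[μ] f)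
    {g : α → E} :
    Integrable g (μ.withDensity fun a => ENNReal.ofReal (f a)) ↔
      Integrable (fun a => f a • g a) μ := by
  rw [integrable_withDensity_iff_integrable_smul₀' hf.ennreal_ofReal
    (ae_of_all _ fun _ => ENNReal.ofReal_lt_top)]
  refine integrable_congr (hf_nonneg.mono fun a ha => ?_)
  simp only [ENNReal.toReal_ofReal ha]

lemma integral_withDensity_ofReal (hf : AEMeasurable f μ) (hf_nonneg : 0 ≤ᵐ[μ] f)
    (g : α → E) :
    ∫ a, g a ∂μ.withDensity (fun a => ENNReal.ofReal (f a)) = ∫ a, f a • g a ∂μ := by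
  rw [integral_withDensity_eq_integral_toReal_smul₀ hf.ennreal_ofReal
    (ae_of_all _ fun _ => ENNReal.ofReal_lt_top)]
  refine integral_congr_ae (hf_nonneg.mono fun a ha => ?_)
  simp only [ENNReal.toReal_ofReal ha]

end WithDensityOfReal

section GaussDensity

variable {n : ℕ} {v : ℝ}

lemma gaussDensity_nonneg (hv : 0 ≤ v) (a z : EuclideanSpace ℝ (Fin n)) :
    0 ≤ gaussDensity n v a z :=
  mul_nonneg (rpow_nonneg (by positivity) _) (exp_pos _).le

lemma gaussDensity_pos (hv : 0 < v) (a z : EuclideanSpace ℝ (Fin n)) :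
    0 < gaussDensity n v a z :=
  mul_pos (rpow_pos_of_pos (by positivity) _) (exp_pos _)

lemma gaussDensity_le (hv : 0 ≤ v) (a z : EuclideanSpace ℝ (Fin n)) :
    gaussDensity n v a z ≤ (2 * π * v) ^ (-(n : ℝ) / 2) := by
  refine mul_le_of_le_one_right (rpow_nonneg (by positivity) _) (exp_le_one_iff.2 ?_)
  exact div_nonpos_of_nonpos_of_nonneg (neg_nonpos.2 (sq_nonneg _)) (by positivity)

lemma norm_gaussDensity_smul_sub_le (hv : 0 < v) (a z : EuclideanSpace ℝ (Fin n)) :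
    ‖gaussDensity n v a z • (a - z)‖ ≤ (2 * π * v) ^ (-(n : ℝ) / 2) * √v := by
  rw [norm_smul, norm_of_nonneg (gaussDensity_nonneg hv.le a z), norm_sub_rev, gaussDensity,
    mul_assoc, mul_comm (exp _)]
  exact mul_le_mul_of_nonneg_left (mul_exp_neg_sq_div_le_sqrt hv _) (rpow_nonneg (by positivity) _)

lemma continuous_gaussDensity (z : EuclideanSpace ℝ (Fin n)) :
    Continuous fun a => gaussDensity n v a z := by
  unfold gaussDensity
  fun_prop

lemma hasGradientAt_gaussDensity (a z : EuclideanSpace ℝ (Fin n)) :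
    HasGradientAt (gaussDensity n v a) (v⁻¹ • gaussDensity n v a z • (a - z)) z := by
  have hfun : gaussDensity n v a =
      fun y => (2 * π * v) ^ (-(n : ℝ) / 2) * exp (-(2 * v)⁻¹ * ‖y - a‖ ^ 2) := by
    funext y
    rw [gaussDensity]
    congr 2
    ring
  have h := (((hasFDerivAt_id z).sub_const a).norm_sq.const_mul (-(2 * v)⁻¹)).exp.const_mul
    ((2 * π * v) ^ (-(n : ℝ) / 2))
  rw [hasGradientAt_iff_hasFDerivAt, hfun]
  refine h.congr_fderiv (ContinuousLinearMap.ext fun y => ?_)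
  simp only [toDual_apply_apply, real_inner_smul_left, smul_apply, id, innerSL_apply_apply,
    smul_eq_mul, nsmul_eq_mul, ContinuousLinearMap.comp_apply, ContinuousLinearMap.id_apply]
  rw [← neg_sub z a, inner_neg_left, mul_inv]
  ring

variable (μ : Measure (EuclideanSpace ℝ (Fin n))) [IsFiniteMeasure μ]

lemma integrable_gaussDensity (hv : 0 ≤ v) (z : EuclideanSpace ℝ (Fin n)) :
    Integrable (fun a => gaussDensity n v a z) μ := by
  refine .of_bound (continuous_gaussDensity z).aestronglyMeasurable
    ((2 * π * v) ^ (-(n : ℝ) / 2)) (ae_of_all _ fun a => ?_)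
  rw [norm_of_nonneg (gaussDensity_nonneg hv a z)]
  exact gaussDensity_le hv a z

lemma integrable_gaussDensity_smul_sub (hv : 0 < v) (z : EuclideanSpace ℝ (Fin n)) :
    Integrable (fun a => gaussDensity n v a z • (a - z)) μ :=
  .of_bound ((continuous_gaussDensity z).smul (continuous_sub_right z)).aestronglyMeasurable _
    (ae_of_all _ fun a => norm_gaussDensity_smul_sub_le hv a z)

lemma integrable_gaussDensity_smul (hv : 0 < v) (z : EuclideanSpace ℝ (Fin n)) :
    Integrable (fun a => gaussDensity n v a z • a) μ := by
  refine ((integrable_gaussDensity_smul_sub μ hv z).add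
    ((integrable_gaussDensity μ hv.le z).smul_const z)).congr (ae_of_all _ fun a => ?_)
  simp only [Pi.add_apply, ← smul_add, sub_add_cancel]

lemma integral_gaussDensity_pos [NeZero μ] (hv : 0 < v) (z : EuclideanSpace ℝ (Fin n)) :
    0 < ∫ a, gaussDensity n v a z ∂μ := by
  have h_supp : Function.support (fun a => gaussDensity n v a z) = Set.univ :=
    Set.eq_univ_of_forall fun a => (gaussDensity_pos hv a z).ne'
  rw [integral_pos_iff_support_of_nonneg (fun a => gaussDensity_nonneg hv.le a z)
    (integrable_gaussDensity μ hv.le z), h_supp, Measure.measure_univ_pos]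
  exact NeZero.ne μ

lemma integral_gaussDensity_smul (hv : 0 < v) (z : EuclideanSpace ℝ (Fin n)) :
    ∫ a, gaussDensity n v a z • a ∂μ =
      ∫ a, gaussDensity n v a z • (a - z) ∂μ + (∫ a, gaussDensity n v a z ∂μ) • z := by
  rw [← integral_smul_const, ← integral_add (integrable_gaussDensity_smul_sub μ hv z)
    ((integrable_gaussDensity μ hv.le z).smul_const z)]
  simp_rw [← smul_add, sub_add_cancel]

theorem hasGradientAt_integral_gaussDensity (hv : 0 < v) (z : EuclideanSpace ℝ (Fin n)) :
    HasGradientAt (fun y => ∫ a, gaussDensity n v a y ∂μ)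
      (v⁻¹ • ∫ a, gaussDensity n v a z • (a - z) ∂μ) z := by
  have h_bound (a y : EuclideanSpace ℝ (Fin n)) :
      ‖v⁻¹ • gaussDensity n v a y • (a - y)‖ ≤ v⁻¹ * ((2 * π * v) ^ (-(n : ℝ) / 2) * √v) := by
    rw [norm_smul, norm_inv, norm_of_nonneg hv.le]
    exact mul_le_mul_of_nonneg_left (norm_gaussDensity_smul_sub_le hv a y) (inv_nonneg.2 hv.le)
  rw [← integral_smul]
  exact hasGradientAt_integral_of_dominated_of_gradient_le (s := Set.univ)
    (f := fun y a => gaussDensity n v a y) (g := fun y a => v⁻¹ • gaussDensity n v a y • (a - y))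
    univ_mem (Eventually.of_forall fun y => (continuous_gaussDensity y).aestronglyMeasurable)
    (integrable_gaussDensity μ hv.le z)
    ((integrable_gaussDensity_smul_sub μ hv z).smul v⁻¹).aestronglyMeasurable
    (ae_of_all _ fun a y _ => h_bound a y) (integrable_const _)
    (ae_of_all _ fun a y _ => hasGradientAt_gaussDensity a y)

end GaussDensity

theorem tweedie_formula_general
    (n : ℕ)
    (μ₀ : Measure (EuclideanSpace ℝ (Fin n))) [IsProbabilityMeasure μ₀]
    (σt : ℝ) (hσt : 0 < σt)
    (x : EuclideanSpace ℝ (Fin n))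
    -- the noise-perturbed prior density `p_t(x) = ∫ N(x; x₀, σ_t² I) dμ₀(x₀)`
    (pt : EuclideanSpace ℝ (Fin n) → ℝ)
    (hpt : ∀ x', pt x' = ∫ x₀, gaussDensity n (σt ^ 2) x₀ x' ∂μ₀)
    -- the conditional law of `x₀` given `x`: `dπ_x/dμ₀(x₀) = N(x; x₀, σ_t²I)/p_t(x)`
    (πx : Measure (EuclideanSpace ℝ (Fin n)))
    (hπx : πx = μ₀.withDensity
      (fun x₀ => ENNReal.ofReal (gaussDensity n (σt ^ 2) x₀ x / pt x))) :
    Integrable (fun x₀ => x₀) πx ∧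
      (∫ x₀, x₀ ∂πx) = x + σt ^ 2 • gradient (fun z => Real.log (pt z)) x := by
  have hv : 0 < σt ^ 2 := by positivity
  have hpt_pos : 0 < pt x := hpt x ▸ integral_gaussDensity_pos μ₀ hv x
  have h_score : gradient (fun z => log (pt z)) x =
      (pt x)⁻¹ • (σt ^ 2)⁻¹ • ∫ x₀, gaussDensity n (σt ^ 2) x₀ x • (x₀ - x) ∂μ₀ := by
    have h := hasGradientAt_integral_gaussDensity μ₀ hv x
    rw [← funext hpt] at h
    exact (h.log hpt_pos.ne').gradient
  have h_meas : AEMeasurable (fun x₀ => gaussDensity n (σt ^ 2) x₀ x / pt x) μ₀ :=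
    ((continuous_gaussDensity x).div_const _).aemeasurable
  have h_nonneg : 0 ≤ᵐ[μ₀] fun x₀ => gaussDensity n (σt ^ 2) x₀ x / pt x :=
    ae_of_all _ fun x₀ => div_nonneg (gaussDensity_nonneg hv.le x₀ x) hpt_pos.le
  subst hπx
  rw [integrable_withDensity_ofReal_iff h_meas h_nonneg,
    integral_withDensity_ofReal h_meas h_nonneg]
  simp_rw [div_eq_inv_mul, mul_smul]
  refine ⟨(integrable_gaussDensity_smul μ₀ hv x).smul (pt x)⁻¹, ?_⟩
  rw [integral_smul, integral_gaussDensity_smul μ₀ hv x, ← hpt x, h_score]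
  match_scalars <;> field_simp

/-- Tweedie's formula: if `π_x` is the conditional law of the clean data `x₀` given the noisy
observation `x` under the VE forward process, i.e. `dπ_x/dμ₀(x₀) = N(x; x₀, σ_t²I)/p_t(x)`,
then `x₀` is `π_x`-integrable and `∫ x₀ dπ_x(x₀) = x + σ_t² ∇ log p_t(x)`. -/
theorem tweedie_formula
    (n : ℕ) (hn : 1 ≤ n)
    (μ₀ : Measure (EuclideanSpace ℝ (Fin n))) [IsProbabilityMeasure μ₀]
    (σt : ℝ) (hσt : 0 < σt)
    (x : EuclideanSpace ℝ (Fin n))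
    -- the noise-perturbed prior density `p_t(x) = ∫ N(x; x₀, σ_t² I) dμ₀(x₀)`
    (pt : EuclideanSpace ℝ (Fin n) → ℝ)
    (hpt : ∀ x', pt x' = ∫ x₀, gaussDensity n (σt ^ 2) x₀ x' ∂μ₀)
    -- the conditional law of `x₀` given `x`: `dπ_x/dμ₀(x₀) = N(x; x₀, σ_t²I)/p_t(x)`
    (πx : Measure (EuclideanSpace ℝ (Fin n)))
    (hπx : πx = μ₀.withDensity
      (fun x₀ => ENNReal.ofReal (gaussDensity n (σt ^ 2) x₀ x / pt x))) :
    Integrable (fun x₀ => x₀) πx ∧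
      (∫ x₀, x₀ ∂πx) = x + σt ^ 2 • gradient (fun z => Real.log (pt z)) x :=
  tweedie_formula_general n μ₀ σt hσt x pt hpt πx hπx
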